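/- Let (X, μ) be a measure space, let L be a finite index type, let (Y ℓ)_{ℓ∈L} be an orthonormal family in L²(μ; ℂ), and let v : X → ℝ be measurable with α ≤ v x ≤ β almost everywhere, for reals α ≤ β. Define E : Matrix L L ℂ by E j ℓ = ∫ conj(Y j x) · (Y ℓ x) · v x ∂μ(x). Let λ ∈ ℝ and let q : L → ℂ be nonzero with E.mulVec q = λ • q, and write q̃(x) := Σ_{ℓ∈L} q ℓ · Y ℓ x. If the set {x : v x < β and q̃ x ≠ 0} has positive μ-measure, then λ < β; and if the set {x : α < v x and q̃ x ≠ 0} has positive μ-measure, then α < λ. -/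

import Mathlib

/-!
Write `G w` for the Gram matrix of the `Y ℓ` in the weighted inner product `∫ conj f * g * w`,
so that `E = G v`, and `q̃ = ∑ ℓ, q ℓ * Y ℓ`. Expanding the sums gives
`star q ⬝ᵥ G w *ᵥ q = ∫ ‖q̃‖² w`, which is positive when `w ≥ 0` a.e. and `w > 0` on a
non-null part of the support of `q̃`. By orthonormality `G (β - v) = β • 1 - E` and
`G (v - α) = E - α • 1`, and `q` is an eigenvector of these with eigenvalues `β - λ` and
`λ - α`; since `star q ⬝ᵥ q > 0`, both are positive.
-/

open MeasureTheory ComplexConjugate Matrix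

theorem conj_sum_mul_sum_mul {ι R : Type*} [CommSemiring R] [StarRing R] (s : Finset ι)
    (a b y : ι → R) (c : R) :
    conj (∑ j ∈ s, a j * y j) * (∑ ℓ ∈ s, b ℓ * y ℓ) * c =
      ∑ j ∈ s, ∑ ℓ ∈ s, conj (a j) * b ℓ * (conj (y j) * y ℓ * c) := by
  rw [map_sum, Finset.sum_mul_sum, Finset.sum_mul]
  refine Finset.sum_congr rfl fun j _ => ?_
  rw [Finset.sum_mul]
  refine Finset.sum_congr rfl fun ℓ _ => ?_
  rw [map_mul]
  ring

section WeightedGram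

variable {X : Type*} [MeasurableSpace X] {μ : Measure X} {L : Type*}

noncomputable def weightedGram (Y : L → Lp ℂ 2 μ) (w : X → ℝ) : Matrix L L ℂ :=
  of fun j ℓ => ∫ x, conj (Y j x) * Y ℓ x * w x ∂μ

theorem integrable_conj_mul_mul_ofReal (f g : Lp ℂ 2 μ) {w : X → ℝ} (hw : MemLp w ⊤ μ) :
    Integrable (fun x => conj (f x) * g x * w x) μ := by
  have hfg : Integrable (fun x => conj (f x) * g x) μ := by
    simpa only [RCLike.inner_apply, mul_comm] using L2.integrable_inner (𝕜 := ℂ) f g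
  exact hfg.mul_of_top_left hw.ofReal

theorem weightedGram_sub (Y : L → Lp ℂ 2 μ) {w₁ w₂ : X → ℝ} (hw₁ : MemLp w₁ ⊤ μ)
    (hw₂ : MemLp w₂ ⊤ μ) :
    weightedGram Y (fun x => w₁ x - w₂ x) = weightedGram Y w₁ - weightedGram Y w₂ := by
  ext j ℓ
  simp only [weightedGram, of_apply, Matrix.sub_apply, Complex.ofReal_sub, mul_sub]
  exact integral_sub (integrable_conj_mul_mul_ofReal _ _ hw₁)
    (integrable_conj_mul_mul_ofReal _ _ hw₂)

theorem Orthonormal.weightedGram_const [DecidableEq L] {Y : L → Lp ℂ 2 μ}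
    (hY : Orthonormal ℂ Y) (c : ℝ) :
    weightedGram Y (fun _ => c) = (c : ℂ) • (1 : Matrix L L ℂ) := by
  ext j ℓ
  have hinner := L2.inner_def (𝕜 := ℂ) (Y j) (Y ℓ)
  simp only [RCLike.inner_apply, orthonormal_iff_ite.mp hY j ℓ] at hinner
  simp only [weightedGram, of_apply, integral_mul_const, Matrix.smul_apply, one_apply,
    smul_eq_mul]
  simp_rw [mul_comm (conj _), ← hinner]
  split_ifs <;> simp

variable [Fintype L]

theorem integrable_conj_sum_mul_sum (Y : L → Lp ℂ 2 μ) (a b : L → ℂ) {w : X → ℝ}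
    (hw : MemLp w ⊤ μ) :
    Integrable (fun x => conj (∑ j, a j * Y j x) * (∑ ℓ, b ℓ * Y ℓ x) * w x) μ := by
  simp_rw [conj_sum_mul_sum_mul]
  exact integrable_finsetSum _ fun j _ => integrable_finsetSum _ fun ℓ _ =>
    (integrable_conj_mul_mul_ofReal _ _ hw).const_mul _

theorem integral_conj_sum_mul_sum (Y : L → Lp ℂ 2 μ) (a b : L → ℂ) {w : X → ℝ}
    (hw : MemLp w ⊤ μ) :
    ∫ x, conj (∑ j, a j * Y j x) * (∑ ℓ, b ℓ * Y ℓ x) * w x ∂μ =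
      star a ⬝ᵥ (weightedGram Y w *ᵥ b) := by
  have hint := fun j ℓ => (integrable_conj_mul_mul_ofReal (Y j) (Y ℓ) hw).const_mul
    (conj (a j) * b ℓ)
  simp_rw [conj_sum_mul_sum_mul]
  rw [integral_finsetSum _ fun j _ => integrable_finsetSum _ fun ℓ _ => hint j ℓ]
  refine Finset.sum_congr rfl fun j _ => ?_
  rw [integral_finsetSum _ fun ℓ _ => hint j ℓ, mulVec, dotProduct, Finset.mul_sum]
  refine Finset.sum_congr rfl fun ℓ _ => ?_
  rw [integral_const_mul, weightedGram, of_apply, Pi.star_apply, Complex.star_def]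
  ring

theorem star_dotProduct_weightedGram_mulVec (Y : L → Lp ℂ 2 μ) (q : L → ℂ) {w : X → ℝ}
    (hw : MemLp w ⊤ μ) :
    star q ⬝ᵥ (weightedGram Y w *ᵥ q) = ↑(∫ x, ‖∑ ℓ, q ℓ * Y ℓ x‖ ^ 2 * w x ∂μ) := by
  rw [← integral_conj_sum_mul_sum Y q q hw, ← integral_complex_ofReal]
  simp only [Complex.conj_mul', Complex.ofReal_mul, Complex.ofReal_pow]

theorem integral_norm_sq_sum_mul_pos (Y : L → Lp ℂ 2 μ) (q : L → ℂ) {w : X → ℝ}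
    (hw : MemLp w ⊤ μ) (hw₀ : 0 ≤ᵐ[μ] w)
    (hpos : 0 < μ {x | 0 < w x ∧ ∑ ℓ, q ℓ * Y ℓ x ≠ 0}) :
    0 < ∫ x, ‖∑ ℓ, q ℓ * Y ℓ x‖ ^ 2 * w x ∂μ := by
  have hint : Integrable (fun x => ‖∑ ℓ, q ℓ * Y ℓ x‖ ^ 2 * w x) μ := by
    refine (integrable_conj_sum_mul_sum Y q q hw).re.congr (.of_forall fun x => ?_)
    simp only [Complex.conj_mul', RCLike.re_to_complex, ← Complex.ofReal_pow,
      Complex.re_ofReal_mul, Complex.ofReal_re]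
  have hnonneg : 0 ≤ᵐ[μ] fun x => ‖∑ ℓ, q ℓ * Y ℓ x‖ ^ 2 * w x := by
    filter_upwards [hw₀] with x hx using mul_nonneg (sq_nonneg _) hx
  rw [integral_pos_iff_support_of_nonneg_ae hnonneg hint]
  exact hpos.trans_le <| measure_mono fun x hx =>
    (mul_pos (pow_pos (norm_pos_iff.2 hx.2) 2) hx.1).ne'

open ComplexOrder in
theorem pos_of_weightedGram_mulVec_eq_smul {Y : L → Lp ℂ 2 μ} {q : L → ℂ} {w : X → ℝ}
    (hw : MemLp w ⊤ μ) (hw₀ : 0 ≤ᵐ[μ] w) {c : ℝ} (hq : q ≠ 0)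
    (heig : weightedGram Y w *ᵥ q = (c : ℂ) • q)
    (hpos : 0 < μ {x | 0 < w x ∧ ∑ ℓ, q ℓ * Y ℓ x ≠ 0}) : 0 < c := by
  obtain ⟨s, hs, hs_eq⟩ := RCLike.pos_iff_exists_ofReal.1 (dotProduct_star_self_pos_iff.2 hq)
  have hform := star_dotProduct_weightedGram_mulVec Y q hw
  rw [heig, dotProduct_smul, ← hs_eq, smul_eq_mul] at hform
  have hcs : c * s = ∫ x, ‖∑ ℓ, q ℓ * Y ℓ x‖ ^ 2 * w x ∂μ :=
    Complex.ofReal_injective (by rw [Complex.ofReal_mul]; exact hform)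
  exact pos_of_mul_pos_left (hcs ▸ integral_norm_sq_sum_mul_pos Y q hw hw₀ hpos) hs.le

end WeightedGram

theorem stmt_6_general {X : Type*} [MeasurableSpace X] {μ : Measure X}
    {L : Type*} [Fintype L]
    (Y : L → Lp ℂ 2 μ) (hY : Orthonormal ℂ Y)
    (v : X → ℝ) (hv : Measurable v) (α β : ℝ)
    (hbound : ∀ᵐ x ∂μ, α ≤ v x ∧ v x ≤ β)
    (E : Matrix L L ℂ)
    (hE : ∀ j ℓ, E j ℓ = ∫ x, conj (Y j x) * (Y ℓ x) * (v x : ℂ) ∂μ)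
    (lam : ℝ) (q : L → ℂ) (hq : q ≠ 0)
    (heig : E.mulVec q = (lam : ℂ) • q) :
    (0 < μ {x | v x < β ∧ (∑ ℓ, q ℓ * Y ℓ x) ≠ 0} → lam < β) ∧
    (0 < μ {x | α < v x ∧ (∑ ℓ, q ℓ * Y ℓ x) ≠ 0} → α < lam) := by
  classical
  have hvE : weightedGram Y v = E := Matrix.ext fun j ℓ => (hE j ℓ).symm
  have hv_top : MemLp v ⊤ μ := memLp_top_of_bound hv.aestronglyMeasurable (max |α| |β|)
    (hbound.mono fun x hx => abs_le_max_abs_abs hx.1 hx.2)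
  constructor
  · intro hpos
    refine sub_pos.1 <| pos_of_weightedGram_mulVec_eq_smul (w := fun x => β - v x)
      ((memLp_top_const β).sub hv_top) (hbound.mono fun x hx => sub_nonneg.2 hx.2) hq ?_
      (hpos.trans_le <| measure_mono fun x hx => ⟨sub_pos.2 hx.1, hx.2⟩)
    rw [weightedGram_sub Y (memLp_top_const β) hv_top, hY.weightedGram_const, hvE, sub_mulVec,
      smul_mulVec, one_mulVec, heig, Complex.ofReal_sub, sub_smul]
  · intro hpos
    refine sub_pos.1 <| pos_of_weightedGram_mulVec_eq_smul (w := fun x => v x - α)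
      (hv_top.sub (memLp_top_const α)) (hbound.mono fun x hx => sub_nonneg.2 hx.1) hq ?_
      (hpos.trans_le <| measure_mono fun x hx => ⟨sub_pos.2 hx.1, hx.2⟩)
    rw [weightedGram_sub Y hv_top (memLp_top_const α), hY.weightedGram_const, hvE, sub_mulVec,
      smul_mulVec, one_mulVec, heig, Complex.ofReal_sub, sub_smul]

/-- Theorem 3.3 (strict form): for an orthonormal family `(Y ℓ)` in `L²(μ; ℂ)`, a
measurable mask `v` with `α ≤ v ≤ β` a.e., and a real eigenvalue `λ` of
`E j ℓ = ∫ conj(Y j x) * Y ℓ x * v x dμ` with eigenvector `q ≠ 0`, writing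
`q̃ x = Σ_ℓ q ℓ * Y ℓ x`: if `{x | v x < β ∧ q̃ x ≠ 0}` has positive measure then
`λ < β`, and if `{x | α < v x ∧ q̃ x ≠ 0}` has positive measure then `α < λ`. -/
theorem stmt_6 {X : Type*} [MeasurableSpace X] {μ : Measure X}
    {L : Type*} [Fintype L]
    (Y : L → Lp ℂ 2 μ) (hY : Orthonormal ℂ Y)
    (v : X → ℝ) (hv : Measurable v) (α β : ℝ) (hαβ : α ≤ β)
    (hbound : ∀ᵐ x ∂μ, α ≤ v x ∧ v x ≤ β)
    (E : Matrix L L ℂ)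
    (hE : ∀ j ℓ, E j ℓ = ∫ x, conj (Y j x) * (Y ℓ x) * (v x : ℂ) ∂μ)
    (lam : ℝ) (q : L → ℂ) (hq : q ≠ 0)
    (heig : E.mulVec q = (lam : ℂ) • q) :
    (0 < μ {x | v x < β ∧ (∑ ℓ, q ℓ * Y ℓ x) ≠ 0} → lam < β) ∧
    (0 < μ {x | α < v x ∧ (∑ ℓ, q ℓ * Y ℓ x) ≠ 0} → α < lam) :=
  stmt_6_general Y hY v hv α β hbound E hE lam q hq heig
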